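/- Let $\phi : \overline{B_{2\sigma}} \setminus B_\sigma \to \mathbb{R}$ be Lipschitz with $|\nabla\phi| \le C$ on the annulus, let $\tilde\phi := \phi|_{\partial B_\sigma}$ (as a function of the angle $\theta$) and $\bar\phi$ its mean over $\partial B_\sigma$. Define $w_\sigma(\rho e^{i\theta}) := e^{i[\theta + \bar\phi + (\rho/\sigma - 1)(\tilde\phi(\theta) - \bar\phi)]}$ on $B_{2\sigma} \setminus B_\sigma$ (annulus centered at origin). Then $\frac{1}{2}\int_{B_{2\sigma}\setminus B_\sigma} |Dw_\sigma|^2\,dx' \le \pi\log 2 + o(1)$ as $\sigma \to 0$, where the $o(1)$ depends only on $C$ and $\sigma$. -/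

import Mathlib

open Real MeasureTheory Filter Complex

noncomputable section

/-- The boundary phase `φ̃(θ) = φ(σ e^{iθ})`. -/
def phiTilde (σ : ℝ) (φ : ℂ → ℝ) (θ : ℝ) : ℝ :=
  φ ((σ : ℂ) * Complex.exp (θ * Complex.I))

/-- The mean `φ̄` of `φ` over `∂B_σ`. -/
def phiBar (σ : ℝ) (φ : ℂ → ℝ) : ℝ :=
  (1 / (2 * π)) * ∫ θ in (0:ℝ)..(2*π), phiTilde σ φ θ

/-- The interpolating map
`w_σ(ρe^{iθ}) = exp(i[θ + φ̄ + (ρ/σ - 1)(φ̃(θ) - φ̄)])`. -/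
def wInterp (σ : ℝ) (φ : ℂ → ℝ) (z : ℂ) : ℂ :=
  Complex.exp (Complex.I * ((Complex.arg z : ℂ) + (phiBar σ φ : ℂ)
    + ((‖z‖ / σ - 1 : ℝ) : ℂ) * ((phiTilde σ φ (Complex.arg z) - phiBar σ φ : ℝ) : ℂ)))

lemma lip_expI : LipschitzWith 1 (fun a : ℝ => Complex.exp ((a:ℂ) * Complex.I)) := by
  apply lipschitzWith_of_nnnorm_deriv_le
  · intro x
    exact ((Complex.ofRealCLM.differentiable.differentiableAt).mul_const Complex.I).cexp
  · intro x
    have h : HasDerivAt (fun a : ℝ => Complex.exp ((a:ℂ) * Complex.I))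
        (Complex.exp ((x:ℂ) * Complex.I) * Complex.I) x := by
      have h1 : HasDerivAt (fun a : ℝ => ((a:ℂ) * Complex.I)) Complex.I x := by
        simpa using (Complex.ofRealCLM.hasDerivAt (x := x)).mul_const Complex.I
      simpa using h1.cexp
    rw [h.deriv]
    simp [← NNReal.coe_le_coe, Complex.norm_exp_ofReal_mul_I]

variable {C σ : ℝ} {φ : ℂ → ℝ}

lemma mem_ann (hσ : 0 < σ) (a : ℝ) :
    (σ:ℂ) * Complex.exp ((a:ℂ) * Complex.I)
      ∈ Metric.closedBall (0:ℂ) (2*σ) \ Metric.ball (0:ℂ) σ := by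
  constructor
  · simp only [Metric.mem_closedBall, dist_zero_right, norm_mul,
      Complex.norm_real, Real.norm_eq_abs, Complex.norm_exp_ofReal_mul_I, mul_one, abs_of_pos hσ]
    linarith
  · simp [Complex.norm_exp_ofReal_mul_I, abs_of_pos hσ]

lemma phiT_lip (hC : 0 ≤ C) (hσ : 0 < σ)
    (hφ : LipschitzOnWith (Real.toNNReal C) φ
      (Metric.closedBall (0:ℂ) (2*σ) \ Metric.ball (0:ℂ) σ)) (a b : ℝ) :
    |phiTilde σ φ a - phiTilde σ φ b| ≤ C * σ * |a - b| := by
  have h := hφ.dist_le_mul _ (mem_ann hσ a) _ (mem_ann hσ b)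
  rw [Real.coe_toNNReal C hC] at h
  have hd : dist ((σ:ℂ) * Complex.exp ((a:ℂ) * Complex.I))
      ((σ:ℂ) * Complex.exp ((b:ℂ) * Complex.I)) ≤ σ * |a - b| := by
    rw [dist_eq_norm, ← mul_sub, norm_mul]
    simp only [Complex.norm_real, Real.norm_eq_abs, abs_of_pos hσ]
    have := lip_expI.dist_le_mul a b
    rw [dist_eq_norm, Real.dist_eq] at this
    simp only [NNReal.coe_one, one_mul] at this
    exact mul_le_mul_of_nonneg_left this hσ.le
  calc |phiTilde σ φ a - phiTilde σ φ b|
      = dist (phiTilde σ φ a) (phiTilde σ φ b) := (Real.dist_eq _ _).symm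
    _ ≤ C * (σ * |a - b|) := le_trans h (mul_le_mul_of_nonneg_left hd hC)
    _ = C * σ * |a - b| := by ring

lemma phiT_bdd (hC : 0 ≤ C) (hσ : 0 < σ)
    (hφ : LipschitzOnWith (Real.toNNReal C) φ
      (Metric.closedBall (0:ℂ) (2*σ) \ Metric.ball (0:ℂ) σ)) (a b : ℝ) :
    |phiTilde σ φ a - phiTilde σ φ b| ≤ 2 * C * σ := by
  have h := hφ.dist_le_mul _ (mem_ann hσ a) _ (mem_ann hσ b)
  rw [Real.coe_toNNReal C hC] at h
  have hd : dist ((σ:ℂ) * Complex.exp ((a:ℂ) * Complex.I))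
      ((σ:ℂ) * Complex.exp ((b:ℂ) * Complex.I)) ≤ 2 * σ := by
    refine (dist_le_norm_add_norm _ _).trans ?_
    simp only [norm_mul, Complex.norm_real, Real.norm_eq_abs,
      Complex.norm_exp_ofReal_mul_I, mul_one, abs_of_pos hσ]
    linarith
  calc |phiTilde σ φ a - phiTilde σ φ b|
      = dist (phiTilde σ φ a) (phiTilde σ φ b) := (Real.dist_eq _ _).symm
    _ ≤ C * (2 * σ) := le_trans h (mul_le_mul_of_nonneg_left hd hC)
    _ = 2 * C * σ := by ring

lemma phiT_cont (hC : 0 ≤ C) (hσ : 0 < σ)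
    (hφ : LipschitzOnWith (Real.toNNReal C) φ
      (Metric.closedBall (0:ℂ) (2*σ) \ Metric.ball (0:ℂ) σ)) :
    Continuous (phiTilde σ φ) := by
  have : LipschitzWith (Real.toNNReal (C * σ)) (phiTilde σ φ) := by
    rw [lipschitzWith_iff_dist_le_mul]
    intro a b
    rw [Real.dist_eq, Real.dist_eq, Real.coe_toNNReal _ (by positivity)]
    exact phiT_lip hC hσ hφ a b
  exact this.continuous

lemma phiBar_dist (hC : 0 ≤ C) (hσ : 0 < σ)
    (hφ : LipschitzOnWith (Real.toNNReal C) φ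
      (Metric.closedBall (0:ℂ) (2*σ) \ Metric.ball (0:ℂ) σ)) (a : ℝ) :
    |phiTilde σ φ a - phiBar σ φ| ≤ 2 * C * σ := by
  have hint : IntervalIntegrable (phiTilde σ φ) volume 0 (2*π) :=
    (phiT_cont hC hσ hφ).intervalIntegrable _ _
  have hπ : (0:ℝ) < π := Real.pi_pos
  have key : phiTilde σ φ a - phiBar σ φ
      = (1 / (2*π)) * ∫ t in (0:ℝ)..(2*π), (phiTilde σ φ a - phiTilde σ φ t) := by
    rw [intervalIntegral.integral_sub (intervalIntegrable_const) hint,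
      intervalIntegral.integral_const]
    unfold phiBar
    field_simp
    ring
  rw [key]
  have hb : |∫ t in (0:ℝ)..(2*π), (phiTilde σ φ a - phiTilde σ φ t)| ≤ 2*C*σ * |2*π - 0| := by
    rw [← Real.norm_eq_abs]
    apply intervalIntegral.norm_integral_le_of_norm_le_const
    intro t _
    rw [Real.norm_eq_abs]
    exact phiT_bdd hC hσ hφ a t
  rw [abs_mul, abs_of_pos (by positivity : (0:ℝ) < 1/(2*π))]
  calc (1/(2*π)) * |∫ t in (0:ℝ)..(2*π), (phiTilde σ φ a - phiTilde σ φ t)|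
      ≤ (1/(2*π)) * (2*C*σ * |2*π - 0|) := by
        exact mul_le_mul_of_nonneg_left hb (by positivity)
    _ = 2*C*σ := by
        rw [sub_zero, abs_of_pos (by positivity)]
        field_simp

lemma wInterp_eq (σ : ℝ) (φ : ℂ → ℝ) (z : ℂ) (hz : z ≠ 0) (ψ : ℝ)
    (hψ : Complex.exp ((ψ:ℂ) * Complex.I) = z / (‖z‖ : ℂ)) :
    wInterp σ φ z = Complex.exp (Complex.I * ((ψ : ℂ) + (phiBar σ φ : ℂ)
      + ((‖z‖ / σ - 1 : ℝ) : ℂ) * ((phiTilde σ φ ψ - phiBar σ φ : ℝ) : ℂ))) := by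
  have habs : (‖z‖ : ℝ) ≠ 0 := by simpa using hz
  have harg : Complex.exp ((Complex.arg z : ℂ) * Complex.I) = z / (‖z‖ : ℂ) := by
    rw [eq_div_iff (by exact_mod_cast habs)]
    rw [mul_comm]
    exact_mod_cast (Complex.norm_mul_exp_arg_mul_I z)
  have htilde : phiTilde σ φ (Complex.arg z) = phiTilde σ φ ψ := by
    unfold phiTilde
    rw [harg, hψ]
  rw [wInterp, htilde]
  rw [mul_add, mul_add, Complex.exp_add, Complex.exp_add, mul_add, mul_add,
    Complex.exp_add, Complex.exp_add]
  congr 1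
  congr 1
  rw [mul_comm Complex.I, mul_comm Complex.I, harg, hψ]

lemma norm_sq_complex (z : ℂ) : ‖z‖^2 = z.re^2 + z.im^2 := by
  rw [Complex.sq_norm, Complex.normSq_apply]; ring

lemma rot_norm_sq (A B : ℂ) (c s : ℝ) (h : c^2 + s^2 = 1) :
    ‖(c:ℂ) * A - (s:ℂ) * B‖^2 + ‖(s:ℂ) * A + (c:ℂ) * B‖^2 = ‖A‖^2 + ‖B‖^2 := by
  simp only [norm_sq_complex, Complex.sub_re, Complex.sub_im, Complex.add_re, Complex.add_im,
    Complex.mul_re, Complex.mul_im, Complex.ofReal_re, Complex.ofReal_im]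
  nlinarith [h, sq_nonneg A.re, sq_nonneg A.im]

lemma pointwise_bound (hC : 0 ≤ C) (hσ : 0 < σ)
    (hφ : LipschitzOnWith (Real.toNNReal C) φ
      (Metric.closedBall (0:ℂ) (2*σ) \ Metric.ball (0:ℂ) σ))
    (x : ℂ) (hx1 : σ < ‖x‖) (hx2 : ‖x‖ < 2*σ) :
    ‖fderiv ℝ (wInterp σ φ) x 1‖^2 + ‖fderiv ℝ (wInterp σ φ) x Complex.I‖^2
      ≤ 4*C^2 + (1+C*σ)^2 / (‖x‖)^2 := by
  set r : ℝ := ‖x‖ with hr_def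
  have hr : 0 < r := lt_trans hσ hx1
  have hxne : x ≠ 0 := by
    simpa [hr_def] using hr.ne'
  by_cases hd : DifferentiableAt ℝ (wInterp σ φ) x
  case neg =>
    rw [fderiv_zero_of_not_differentiableAt hd]
    simp only [ContinuousLinearMap.zero_apply, norm_zero]
    norm_num
    positivity
  case pos =>
  set L := fderiv ℝ (wInterp σ φ) x with hL
  have hLd : HasFDerivAt (wInterp σ φ) L x := hd.hasFDerivAt
  set θ : ℝ := Complex.arg x with hθ_def
  set δ : ℝ := phiTilde σ φ θ - phiBar σ φ with hδ_def
  have hδb : |δ| ≤ 2*C*σ := phiBar_dist hC hσ hφ θ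
  have hexpθ : Complex.exp ((θ:ℂ) * Complex.I) = x / (r:ℂ) := by
    rw [eq_div_iff (by exact_mod_cast hr.ne')]
    rw [mul_comm]
    exact_mod_cast (Complex.norm_mul_exp_arg_mul_I x)
  -- Radial bound
  have hA : ‖L (x / (r:ℂ))‖ ≤ 2*C := by
    set cρ : ℝ → ℂ := fun t => ((1 + t/r : ℝ):ℂ) * x with hcρ_def
    have hcρ0 : cρ 0 = x := by simp [hcρ_def]
    have hder : HasDerivAt cρ (x / (r:ℂ)) 0 := by
      have hrC : ((r:ℝ):ℂ) ≠ 0 := by exact_mod_cast hr.ne'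
      have h1 : HasDerivAt (fun t : ℝ => ((1 + t/r : ℝ):ℂ)) (((r:ℝ):ℂ))⁻¹ 0 := by
        have h0 : HasDerivAt (fun t : ℝ => (1 + t/r : ℝ)) (1/r) 0 :=
          ((hasDerivAt_id (0:ℝ)).div_const r).const_add 1
        simpa [Function.comp_def] using Complex.ofRealCLM.hasFDerivAt.comp_hasDerivAt 0 h0
      refine (h1.mul_const x).congr_deriv ?_
      rw [div_eq_mul_inv, mul_comm]
    have hcomp : HasDerivAt (wInterp σ φ ∘ cρ) (L (x / (r:ℂ))) 0 := by
      refine HasFDerivAt.comp_hasDerivAt 0 ?_ hder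
      rw [hcρ0]; exact hLd
    set h : ℝ → ℝ := fun t => θ + phiBar σ φ + ((r + t)/σ - 1) * δ with hh_def
    set g : ℝ → ℂ := fun t => Complex.exp (((h t : ℝ):ℂ) * Complex.I) with hg_def
    have hgl : LipschitzWith (Real.toNNReal (2*C)) g := by
      have hlh : LipschitzWith (Real.toNNReal (2*C)) h := by
        rw [lipschitzWith_iff_dist_le_mul]
        intro a b
        rw [Real.dist_eq, Real.dist_eq, Real.coe_toNNReal _ (by positivity)]
        have : h a - h b = (a - b) * (δ / σ) := by rw [hh_def]; field_simp; ring
        rw [this, abs_mul, abs_div, abs_of_pos hσ]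
        rw [mul_comm (2*C)]
        apply mul_le_mul_of_nonneg_left _ (abs_nonneg _)
        rw [div_le_iff₀ hσ]
        linarith [hδb]
      have := lip_expI.comp hlh
      rw [one_mul] at this
      exact this
    have heq : ∀ t ∈ Metric.ball (0:ℝ) (r/2), (wInterp σ φ ∘ cρ) t = g t := by
      intro t ht
      rw [Metric.mem_ball, Real.dist_eq, sub_zero] at ht
      have ht1 : -r < t := by cases' abs_lt.1 ht with h1 h2; linarith
      have hrt : (0:ℝ) < r + t := by linarith
      have ht2 : 0 < 1 + t/r := by
        rw [show (1 + t/r) = (r+t)/r by field_simp]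
        positivity
      have hzne : cρ t ≠ 0 := by
        apply mul_ne_zero _ hxne
        exact_mod_cast (ne_of_gt ht2)
      have habs : ‖(cρ t)‖ = r + t := by
        rw [hcρ_def]
        simp only [norm_mul, Complex.norm_real, Real.norm_eq_abs, abs_of_pos ht2, ← hr_def]
        field_simp
      have hψ : Complex.exp ((θ:ℂ) * Complex.I) = cρ t / ((‖(cρ t)‖ : ℝ):ℂ) := by
        rw [habs, hexpθ, hcρ_def]
        have hrC : ((r:ℝ):ℂ) ≠ 0 := by exact_mod_cast hr.ne'
        have hrtC : ((r+t:ℝ):ℂ) ≠ 0 := by exact_mod_cast hrt.ne'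
        push_cast at hrC hrtC ⊢
        field_simp
      have := wInterp_eq σ φ (cρ t) hzne θ hψ
      rw [Function.comp_apply, this, habs, hg_def, hh_def]
      congr 1
      rw [← hδ_def]
      push_cast
      ring
    have hlip : LipschitzOnWith (Real.toNNReal (2*C)) (wInterp σ φ ∘ cρ)
        (Metric.ball (0:ℝ) (r/2)) := by
      rw [lipschitzOnWith_iff_dist_le_mul]
      intro a ha b hb
      rw [heq a ha, heq b hb]
      exact hgl.dist_le_mul a b
    have hball : Metric.ball (0:ℝ) (r/2) ∈ nhds (0:ℝ) :=
      Metric.ball_mem_nhds 0 (by positivity)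
    have := (hasDerivAt_iff_hasFDerivAt.1 hcomp).le_of_lipschitzOn hball hlip
    rw [ContinuousLinearMap.norm_toSpanSingleton] at this
    exact le_trans this (le_of_eq (Real.coe_toNNReal _ (by positivity)))
  -- Angular bound
  have hrC : ((r:ℝ):ℂ) ≠ 0 := by exact_mod_cast hr.ne'
  have hB : ‖L (x * Complex.I / (r:ℂ))‖ ≤ (1 + C*σ)/r := by
    set cθ : ℝ → ℂ := fun t => x * Complex.exp (((t/r : ℝ):ℂ) * Complex.I) with hcθ_def
    have hcθ0 : cθ 0 = x := by simp [hcθ_def]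
    have hder : HasDerivAt cθ (x * Complex.I / (r:ℂ)) 0 := by
      have h0 : HasDerivAt (fun t : ℝ => t/r) (1/r) 0 := (hasDerivAt_id (0:ℝ)).div_const r
      have h1 : HasDerivAt (fun t : ℝ => ((t/r:ℝ):ℂ)) (((1/r:ℝ):ℂ)) 0 := by
        simpa [Function.comp_def] using Complex.ofRealCLM.hasFDerivAt.comp_hasDerivAt 0 h0
      have h2 := ((h1.mul_const Complex.I).cexp).const_mul x
      refine h2.congr_deriv ?_
      push_cast
      simp
      ring
    have hcomp : HasDerivAt (wInterp σ φ ∘ cθ) (L (x * Complex.I / (r:ℂ))) 0 := by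
      refine HasFDerivAt.comp_hasDerivAt 0 ?_ hder
      rw [hcθ0]; exact hLd
    set h2f : ℝ → ℝ := fun t => (θ + t/r) + phiBar σ φ
      + (r/σ - 1) * (phiTilde σ φ (θ + t/r) - phiBar σ φ) with hh2
    set g2 : ℝ → ℂ := fun t => Complex.exp (((h2f t : ℝ):ℂ) * Complex.I) with hg2
    have hfac1 : 0 ≤ r/σ - 1 := by
      rw [sub_nonneg, le_div_iff₀ hσ, one_mul]; exact hx1.le
    have hfac2 : r/σ - 1 ≤ 1 := by
      rw [sub_le_iff_le_add, div_le_iff₀ hσ]; linarith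
    have hlh : LipschitzWith (Real.toNNReal ((1+C*σ)/r)) h2f := by
      rw [lipschitzWith_iff_dist_le_mul]
      intro a b
      rw [Real.dist_eq, Real.dist_eq, Real.coe_toNNReal _ (by positivity)]
      have e1 : h2f a - h2f b = (a-b)/r
          + (r/σ-1) * (phiTilde σ φ (θ+a/r) - phiTilde σ φ (θ+b/r)) := by
        rw [hh2]; ring
      have p1 := phiT_lip hC hσ hφ (θ+a/r) (θ+b/r)
      rw [show θ + a/r - (θ + b/r) = (a-b)/r from by ring] at p1
      have habd : |(a-b)/r| = |a-b|/r := by rw [abs_div, abs_of_pos hr]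
      rw [habd] at p1
      calc |h2f a - h2f b|
          ≤ |(a-b)/r| + |(r/σ-1) * (phiTilde σ φ (θ+a/r) - phiTilde σ φ (θ+b/r))| := by
            rw [e1]; exact abs_add_le _ _
        _ ≤ |a-b|/r + 1 * (C*σ*(|a-b|/r)) := by
            rw [habd, abs_mul, _root_.abs_of_nonneg hfac1]
            exact add_le_add le_rfl
              (mul_le_mul hfac2 p1 (abs_nonneg _) one_pos.le)
        _ = (1+C*σ)/r * |a-b| := by field_simp
    have heq : ∀ t, (wInterp σ φ ∘ cθ) t = g2 t := by
      intro t
      have hzne : cθ t ≠ 0 := mul_ne_zero hxne (Complex.exp_ne_zero _)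
      have habs2 : ‖(cθ t)‖ = r := by
        rw [hcθ_def]
        simp only [norm_mul, Complex.norm_exp_ofReal_mul_I, mul_one, ← hr_def]
      have hψ : Complex.exp (((θ + t/r : ℝ):ℂ) * Complex.I)
          = cθ t / ((‖(cθ t)‖ : ℝ):ℂ) := by
        rw [habs2, hcθ_def]
        push_cast
        rw [add_mul, Complex.exp_add]
        rw [show ((θ:ℂ)) * Complex.I = (θ:ℝ) * Complex.I from by push_cast; ring, hexpθ]
        push_cast
        field_simp
      have := wInterp_eq σ φ (cθ t) hzne (θ + t/r) hψ
      rw [Function.comp_apply, this, habs2, hg2, hh2]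
      congr 1
      push_cast
      ring
    have hlips : LipschitzWith (Real.toNNReal ((1+C*σ)/r)) (wInterp σ φ ∘ cθ) := by
      have hfe : wInterp σ φ ∘ cθ = g2 := funext heq
      rw [hfe, hg2]
      have := lip_expI.comp hlh
      rw [one_mul] at this
      exact this
    have := (hasDerivAt_iff_hasFDerivAt.1 hcomp).le_of_lipschitz hlips
    rw [ContinuousLinearMap.norm_toSpanSingleton] at this
    exact le_trans this (le_of_eq (Real.coe_toNNReal _ (by positivity)))
  -- Rotation identity and conclusion
  have hsq : x.re^2 + x.im^2 = r^2 := by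
    have h := Complex.sq_norm x
    rw [Complex.normSq_apply] at h
    rw [hr_def]
    nlinarith [h]
  set c : ℝ := x.re / r with hc_def
  set s : ℝ := x.im / r with hs_def
  have hcs : c^2 + s^2 = 1 := by
    rw [hc_def, hs_def]
    field_simp
    linarith [hsq]
  have hx_conj : ((x.re:ℂ) - (x.im:ℂ)*Complex.I) * x = ((r:ℝ):ℂ)^2 := by
    have h1 : ((x.re:ℂ) - (x.im:ℂ)*Complex.I) = (starRingEnd ℂ) x := by
      apply Complex.ext <;> simp
    rw [h1, mul_comm, Complex.mul_conj]
    rw [Complex.normSq_eq_norm_sq, ← hr_def]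
    push_cast
    ring
  have h1c : (1:ℂ) = (c:ℂ) * (x/(r:ℂ)) - (s:ℂ) * (x*Complex.I/(r:ℂ)) := by
    rw [hc_def, hs_def]
    push_cast
    field_simp
    linear_combination -hx_conj
  have hIc : Complex.I = (s:ℂ) * (x/(r:ℂ)) + (c:ℂ) * (x*Complex.I/(r:ℂ)) := by
    rw [hc_def, hs_def]
    push_cast
    field_simp
    linear_combination -Complex.I * hx_conj + (-(x.im:ℂ)*x) * Complex.I_sq
  have e1 : L 1 = (c:ℂ) * L (x/(r:ℂ)) - (s:ℂ) * L (x*Complex.I/(r:ℂ)) := by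
    conv_lhs => rw [h1c]
    rw [show ((c:ℂ)) * (x/(r:ℂ)) - (s:ℂ) * (x*Complex.I/(r:ℂ))
        = c • (x/(r:ℂ)) - s • (x*Complex.I/(r:ℂ)) from by
      rw [Complex.real_smul, Complex.real_smul]]
    rw [map_sub, L.map_smul, L.map_smul, Complex.real_smul, Complex.real_smul]
  have e2 : L Complex.I = (s:ℂ) * L (x/(r:ℂ)) + (c:ℂ) * L (x*Complex.I/(r:ℂ)) := by
    conv_lhs => rw [hIc]
    rw [show ((s:ℂ)) * (x/(r:ℂ)) + (c:ℂ) * (x*Complex.I/(r:ℂ))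
        = s • (x/(r:ℂ)) + c • (x*Complex.I/(r:ℂ)) from by
      rw [Complex.real_smul, Complex.real_smul]]
    rw [map_add, L.map_smul, L.map_smul, Complex.real_smul, Complex.real_smul]
  calc ‖L 1‖^2 + ‖L Complex.I‖^2
      = ‖(c:ℂ) * L (x/(r:ℂ)) - (s:ℂ) * L (x*Complex.I/(r:ℂ))‖^2
        + ‖(s:ℂ) * L (x/(r:ℂ)) + (c:ℂ) * L (x*Complex.I/(r:ℂ))‖^2 := by rw [e1, e2]
    _ = ‖L (x/(r:ℂ))‖^2 + ‖L (x*Complex.I/(r:ℂ))‖^2 := rot_norm_sq _ _ c s hcs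
    _ ≤ (2*C)^2 + ((1+C*σ)/r)^2 := by
        refine add_le_add (pow_le_pow_left₀ (norm_nonneg _) hA 2)
          (pow_le_pow_left₀ (norm_nonneg _) hB 2)
    _ = 4*C^2 + (1+C*σ)^2/r^2 := by rw [div_pow]; ring

lemma vol_ann_toReal {σ : ℝ} (hσ : 0 < σ) :
    (volume (Metric.ball (0:ℂ) (2*σ) \ Metric.closedBall (0:ℂ) σ)).toReal = 3*π*σ^2 := by
  have hsub : Metric.closedBall (0:ℂ) σ ⊆ Metric.ball (0:ℂ) (2*σ) :=
    Metric.closedBall_subset_ball (by linarith)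
  rw [measure_diff hsub measurableSet_closedBall.nullMeasurableSet
    measure_closedBall_lt_top.ne, Complex.volume_ball, Complex.volume_closedBall]
  have h1 : ENNReal.ofReal ((2*σ)^2 * π) = (ENNReal.ofReal (2*σ))^2 * (NNReal.pi : ENNReal) := by
    rw [ENNReal.ofReal_mul (by positivity), ENNReal.ofReal_pow (by positivity)]
    congr 1
    rw [← NNReal.coe_real_pi, ENNReal.ofReal_coe_nnreal]
  have h2 : ENNReal.ofReal (σ^2 * π) = (ENNReal.ofReal σ)^2 * (NNReal.pi : ENNReal) := by
    rw [ENNReal.ofReal_mul (by positivity), ENNReal.ofReal_pow (by positivity)]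
    congr 1
    rw [← NNReal.coe_real_pi, ENNReal.ofReal_coe_nnreal]
  rw [← h1, ← h2, ← ENNReal.ofReal_sub _ (by positivity),
    ENNReal.toReal_ofReal (by nlinarith [Real.pi_pos])]
  ring

lemma radial_integral {σ : ℝ} (hσ : 0 < σ) :
    ∫ x in Metric.ball (0:ℂ) (2*σ) \ Metric.closedBall (0:ℂ) σ, (‖x‖^2)⁻¹
      = 2*π*Real.log 2 := by
  set S := Metric.ball (0:ℂ) (2*σ) \ Metric.closedBall (0:ℂ) σ with hS
  have hmeasS : MeasurableSet S := Metric.isOpen_ball.measurableSet.diff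
    Metric.isClosed_closedBall.measurableSet
  set F : ℝ → ℝ := Set.indicator (Set.Ioo σ (2*σ)) (fun y => (y^2)⁻¹) with hF
  have step1 : ∫ x in S, (‖x‖^2)⁻¹ = ∫ x : ℂ, F ‖x‖ := by
    rw [← integral_indicator hmeasS]
    congr 1
    funext x
    have hmem : x ∈ S ↔ ‖x‖ ∈ Set.Ioo σ (2*σ) := by
      simp [hS, Set.mem_Ioo, and_comm]
    by_cases hx : x ∈ S
    · rw [Set.indicator_of_mem hx, hF, Set.indicator_of_mem (hmem.1 hx)]
    · rw [Set.indicator_of_notMem hx, hF, Set.indicator_of_notMem (fun h => hx (hmem.2 h))]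
  have step2 := MeasureTheory.integral_fun_norm_addHaar (volume : Measure ℂ) F
  rw [Complex.finrank_real_complex] at step2
  have hvol1 : (volume (Metric.ball (0:ℂ) 1)).toReal = π := by
    rw [Complex.volume_ball]
    simp [← NNReal.coe_real_pi]
  rw [measureReal_def, hvol1] at step2
  have step3 : ∫ y in Set.Ioi (0:ℝ), y ^ (2-1 : ℕ) • F y = Real.log 2 := by
    have hfun : ∀ y ∈ Set.Ioi (0:ℝ), y ^ (2-1:ℕ) • F y
        = Set.indicator (Set.Ioo σ (2*σ)) (fun y => y⁻¹) y := by
      intro y hy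
      simp only [pow_one, smul_eq_mul, hF]
      by_cases h : y ∈ Set.Ioo σ (2*σ)
      · rw [Set.indicator_of_mem h, Set.indicator_of_mem h]
        have hy0 : y ≠ 0 := (lt_trans hσ h.1).ne'
        field_simp
        ring
      · rw [Set.indicator_of_notMem h, Set.indicator_of_notMem h, mul_zero]
    rw [setIntegral_congr_fun measurableSet_Ioi hfun]
    rw [setIntegral_indicator measurableSet_Ioo]
    have hinter : Set.Ioi (0:ℝ) ∩ Set.Ioo σ (2*σ) = Set.Ioo σ (2*σ) :=
      Set.inter_eq_self_of_subset_right (fun y hy => lt_trans hσ hy.1)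
    rw [hinter, ← integral_Ioc_eq_integral_Ioo,
      ← intervalIntegral.integral_of_le (by linarith : σ ≤ 2*σ)]
    rw [integral_inv_of_pos hσ (by linarith)]
    congr 1
    field_simp
  rw [step1, step2, step3]
  simp [smul_eq_mul]
  ring


/-- Step 2 of the Γ-limsup construction: the phase interpolation `w_σ` has
Dirichlet energy at most `π log 2 + o(1)` as `σ → 0`, with an error depending
only on the Lipschitz constant `C` and on `σ`. -/
theorem stmt_18 (C : ℝ) (hC : 0 ≤ C) :
    ∃ e : ℝ → ℝ, Tendsto e (nhdsWithin 0 (Set.Ioi 0)) (nhds 0) ∧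
      ∀ σ : ℝ, 0 < σ → ∀ φ : ℂ → ℝ,
        LipschitzOnWith (Real.toNNReal C) φ
          (Metric.closedBall (0:ℂ) (2*σ) \ Metric.ball (0:ℂ) σ) →
        (1/2) * (∫ x in Metric.ball (0:ℂ) (2*σ) \ Metric.closedBall (0:ℂ) σ,
            (‖fderiv ℝ (wInterp σ φ) x 1‖^2 + ‖fderiv ℝ (wInterp σ φ) x Complex.I‖^2))
          ≤ π * Real.log 2 + e σ := by
  refine ⟨fun σ => 6*π*C^2*σ^2 + π*Real.log 2*((1+C*σ)^2 - 1), ?_, ?_⟩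
  · have hcont : Continuous fun σ : ℝ =>
        6*π*C^2*σ^2 + π*Real.log 2*((1+C*σ)^2 - 1) := by continuity
    have h0 := hcont.tendsto' 0 0 (by norm_num)
    exact h0.mono_left nhdsWithin_le_nhds
  · intro σ hσ φ hφ
    set S := Metric.ball (0:ℂ) (2*σ) \ Metric.closedBall (0:ℂ) σ with hS
    have hmeasS : MeasurableSet S := Metric.isOpen_ball.measurableSet.diff
      Metric.isClosed_closedBall.measurableSet
    set g : ℂ → ℝ := fun x => 4*C^2 + (1+C*σ)^2 * (‖x‖^2)⁻¹ with hg
    set f : ℂ → ℝ := fun x => ‖fderiv ℝ (wInterp σ φ) x 1‖^2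
      + ‖fderiv ℝ (wInterp σ φ) x Complex.I‖^2 with hf
    have hfg : ∀ x ∈ S, f x ≤ g x := by
      intro x hx
      obtain ⟨hx1, hx2⟩ := hx
      rw [Metric.mem_ball, dist_zero_right] at hx1
      rw [Metric.mem_closedBall, dist_zero_right, not_le] at hx2
      have := pointwise_bound hC hσ hφ x (by exact hx2)
        (by exact hx1)
      rw [hf, hg]
      calc ‖fderiv ℝ (wInterp σ φ) x 1‖^2 + ‖fderiv ℝ (wInterp σ φ) x Complex.I‖^2
          ≤ 4*C^2 + (1+C*σ)^2 / (‖x‖)^2 := this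
        _ = 4*C^2 + (1+C*σ)^2 * (‖x‖^2)⁻¹ := by
            rw [div_eq_mul_inv]
    have hS_fin : volume S ≠ ⊤ :=
      ((measure_mono Set.diff_subset).trans_lt measure_ball_lt_top).ne
    have hinv_msr : AEStronglyMeasurable (fun x : ℂ => (‖x‖^2)⁻¹) volume :=
      ((measurable_norm.pow_const 2).inv).aestronglyMeasurable
    have hinv_int : IntegrableOn (fun x : ℂ => (‖x‖^2)⁻¹) S volume := by
      apply Measure.integrableOn_of_bounded (M := (σ^2)⁻¹) hS_fin hinv_msr
      rw [ae_restrict_iff' hmeasS]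
      refine Filter.Eventually.of_forall fun x hx => ?_
      obtain ⟨hx1, hx2⟩ := hx
      rw [Metric.mem_closedBall, dist_zero_right, not_le] at hx2
      rw [Real.norm_eq_abs, _root_.abs_of_nonneg (by positivity)]
      exact inv_anti₀ (by positivity) (pow_le_pow_left₀ hσ.le hx2.le 2)
    have hconst_int : IntegrableOn (fun _ : ℂ => (4*C^2 : ℝ)) S volume :=
      integrableOn_const hS_fin
    have hg_int : IntegrableOn g S volume := by
      rw [hg]
      exact hconst_int.add (hinv_int.const_mul _)
    have hmono : ∫ x in S, f x ≤ ∫ x in S, g x := by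
      apply integral_mono_of_nonneg
      · exact Filter.Eventually.of_forall fun x => by rw [hf]; positivity
      · exact hg_int
      · exact (ae_restrict_iff' hmeasS).2 (Filter.Eventually.of_forall hfg)
    have hgval : ∫ x in S, g x = 4*C^2 * (3*π*σ^2) + (1+C*σ)^2 * (2*π*Real.log 2) := by
      rw [hg, integral_add hconst_int (hinv_int.const_mul _), setIntegral_const,
        integral_const_mul, hS, measureReal_def, vol_ann_toReal hσ, radial_integral hσ]
      rw [smul_eq_mul]
      ring
    calc (1/2) * (∫ x in S, f x)
        ≤ (1/2) * (∫ x in S, g x) := by linarith [hmono]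
      _ = π * Real.log 2 + (6*π*C^2*σ^2 + π*Real.log 2*((1+C*σ)^2 - 1)) := by
          rw [hgval]; ring

end
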